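/- arXiv:2304.03488 — 3 statements merged into one kernel-verified Lean document; each statement's English description precedes it below -/
import Mathlib

section
/- Let α ∈ ℝ and let φ : ℝ² → ℝ, φ = φ(t,s), be twice continuously differentiable with φ_s(t,s) > 0 for all (t,s), satisfying the one-dimensional SMHD equation in Lagrangian coordinates with parabolic bottom concave up (b′(φ) = φ): φ_tt − α² φ_ss + ∂_s(1/φ_s²) − φ = 0. Then the additional conservation law holds identically: ∂_t( (φ − φ_t − φ_s) e^t ) + ∂_s( (α² φ_s + φ_t + φ − 1/φ_s²) e^t ) = 0 for all (t,s). -/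
/-! Writing `E = eᵗ`, the product rule gives
`∂ₜ((φ - φₜ - φₛ) E) + ∂ₛ((α² φₛ + φₜ + φ - 1/φₛ²) E)`
`= (φ - φₜₜ + α² φₛₛ - ∂ₛ(1/φₛ²)) E + (φₜₛ - φₛₜ) E`: the first term is minus the equation
times `E`, the second vanishes by Schwarz's theorem. The positivity of `φₛ` makes `1/φₛ²`
differentiable in `s`, so that `ps` is a genuine derivative of it. -/

/-- Partial derivative with respect to the first (time) variable. -/
noncomputable def pt (f : ℝ → ℝ → ℝ) (t s : ℝ) : ℝ := deriv (fun t' => f t' s) t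

/-- Partial derivative with respect to the second (space) variable. -/
noncomputable def ps (f : ℝ → ℝ → ℝ) (t s : ℝ) : ℝ := deriv (fun s' => f t s') s

open Function

section Partials

variable {f : ℝ → ℝ → ℝ} {t s : ℝ}

theorem hasDerivAt_pt (hf : DifferentiableAt ℝ (uncurry f) (t, s)) :
    HasDerivAt (fun u => f u s) (pt f t s) t :=
  (hf.comp (f := fun u => (u, s)) t
    (differentiableAt_id.prodMk (differentiableAt_const s))).hasDerivAt

theorem hasDerivAt_ps (hf : DifferentiableAt ℝ (uncurry f) (t, s)) :
    HasDerivAt (fun u => f t u) (ps f t s) s :=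
  (hf.comp (f := fun u => (t, u)) s
    ((differentiableAt_const t).prodMk differentiableAt_id)).hasDerivAt

theorem pt_eq_fderiv (hf : DifferentiableAt ℝ (uncurry f) (t, s)) :
    pt f t s = fderiv ℝ (uncurry f) (t, s) (1, 0) :=
  (hf.hasFDerivAt.comp_hasDerivAt (f := fun u => (u, s)) t
    ((hasDerivAt_id t).prodMk (hasDerivAt_const t s))).deriv

theorem ps_eq_fderiv (hf : DifferentiableAt ℝ (uncurry f) (t, s)) :
    ps f t s = fderiv ℝ (uncurry f) (t, s) (0, 1) :=
  (hf.hasFDerivAt.comp_hasDerivAt (f := fun u => (t, u)) s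
    ((hasDerivAt_const s t).prodMk (hasDerivAt_id s))).deriv

theorem uncurry_pt_eq_fderiv (hf : Differentiable ℝ (uncurry f)) :
    uncurry (pt f) = fun p => fderiv ℝ (uncurry f) p (1, 0) :=
  funext fun p => pt_eq_fderiv (hf p)

theorem uncurry_ps_eq_fderiv (hf : Differentiable ℝ (uncurry f)) :
    uncurry (ps f) = fun p => fderiv ℝ (uncurry f) p (0, 1) :=
  funext fun p => ps_eq_fderiv (hf p)

variable {m n : WithTop ℕ∞}

theorem ne_zero_of_add_one_le (hmn : m + 1 ≤ n) : n ≠ 0 := by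
  rintro rfl
  simp at hmn

theorem ContDiff.uncurry_pt (hf : ContDiff ℝ n (uncurry f)) (hmn : m + 1 ≤ n) :
    ContDiff ℝ m (uncurry (pt f)) := by
  rw [uncurry_pt_eq_fderiv (hf.differentiable (ne_zero_of_add_one_le hmn))]
  exact (hf.fderiv_right hmn).clm_apply contDiff_const

theorem ContDiff.uncurry_ps (hf : ContDiff ℝ n (uncurry f)) (hmn : m + 1 ≤ n) :
    ContDiff ℝ m (uncurry (ps f)) := by
  rw [uncurry_ps_eq_fderiv (hf.differentiable (ne_zero_of_add_one_le hmn))]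
  exact (hf.fderiv_right hmn).clm_apply contDiff_const

theorem pt_ps_eq_ps_pt (hf : ContDiff ℝ 2 (uncurry f)) (t s : ℝ) :
    pt (ps f) t s = ps (pt f) t s := by
  have hf₁ : Differentiable ℝ (uncurry f) := hf.differentiable two_ne_zero
  have hf₂ : Differentiable ℝ (fderiv ℝ (uncurry f)) :=
    (hf.fderiv_right (by norm_num)).differentiable one_ne_zero
  rw [pt_eq_fderiv ((hf.uncurry_ps (m := 1) (by norm_num)).differentiable one_ne_zero _),
    ps_eq_fderiv ((hf.uncurry_pt (m := 1) (by norm_num)).differentiable one_ne_zero _),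
    uncurry_ps_eq_fderiv hf₁, uncurry_pt_eq_fderiv hf₁,
    fderiv_clm_apply (hf₂ _) (differentiableAt_const _),
    fderiv_clm_apply (hf₂ _) (differentiableAt_const _)]
  simpa using hf.contDiffAt.isSymmSndFDerivAt (by simp) (1, 0) (0, 1)

end Partials

/-- first additional conservation law for the parabolic bottom
concave up (b'(φ) = φ). -/
theorem smhd_parabolic_up_cl1
    (α : ℝ) (φ : ℝ → ℝ → ℝ)
    (hφ : ContDiff ℝ 2 (fun p : ℝ × ℝ => φ p.1 p.2))
    (hpos : ∀ t s, 0 < ps φ t s)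
    (hpde : ∀ t s,
      pt (pt φ) t s - α ^ 2 * ps (ps φ) t s
        + ps (fun t s => 1 / (ps φ t s) ^ 2) t s - φ t s = 0) :
    ∀ t s,
      pt (fun t s => (φ t s - pt φ t s - ps φ t s) * Real.exp t) t s
        + ps (fun t s =>
            (α ^ 2 * ps φ t s + pt φ t s + φ t s - 1 / (ps φ t s) ^ 2)
              * Real.exp t) t s = 0 := by
  intro t s
  have hφ' : ContDiff ℝ 2 (uncurry φ) := hφ
  have hφ₁ : ContDiff ℝ 1 (uncurry φ) := hφ'.of_le (by norm_num)
  have hφ_t : ContDiff ℝ 1 (uncurry (pt φ)) := hφ'.uncurry_pt (by norm_num)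
  have hφ_s : ContDiff ℝ 1 (uncurry (ps φ)) := hφ'.uncurry_ps (by norm_num)
  have hinv : DifferentiableAt ℝ (uncurry fun t s => 1 / ps φ t s ^ 2) (t, s) := by
    simp only [one_div]
    exact ((hφ_s.differentiable one_ne_zero (t, s)).pow 2).inv (pow_ne_zero 2 (hpos t s).ne')
  have hdiff {g : ℝ → ℝ → ℝ} (hg : ContDiff ℝ 1 (uncurry g)) :
      DifferentiableAt ℝ (uncurry g) (t, s) :=
    hg.differentiable one_ne_zero _
  have ht : pt (fun t s => (φ t s - pt φ t s - ps φ t s) * Real.exp t) t s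
      = (pt φ t s - pt (pt φ) t s - pt (ps φ) t s) * Real.exp t
        + (φ t s - pt φ t s - ps φ t s) * Real.exp t :=
    ((((hasDerivAt_pt (hdiff hφ₁)).sub (hasDerivAt_pt (hdiff hφ_t))).sub
      (hasDerivAt_pt (hdiff hφ_s))).mul (Real.hasDerivAt_exp t)).deriv
  have hs : ps (fun t s =>
        (α ^ 2 * ps φ t s + pt φ t s + φ t s - 1 / (ps φ t s) ^ 2) * Real.exp t) t s
      = (α ^ 2 * ps (ps φ) t s + ps (pt φ) t s + ps φ t s
          - ps (fun t s => 1 / (ps φ t s) ^ 2) t s) * Real.exp t :=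
    (((((hasDerivAt_ps (hdiff hφ_s)).const_mul (α ^ 2)).add (hasDerivAt_ps (hdiff hφ_t))).add
      (hasDerivAt_ps (hdiff hφ₁))).sub
      (hasDerivAt_ps hinv)).mul_const (Real.exp t) |>.deriv
  rw [ht, hs, pt_ps_eq_ps_pt hφ']
  linear_combination (-Real.exp t) * hpde t s
end

section
/- Let α ∈ ℝ, τ > 0, h > 0 and let x : ℤ × ℤ → ℝ be a grid function with x_s(n,i) ≠ 0 for all (n,i), satisfying the invariant scheme for the SMHD equations with parabolic bottom concave down, i.e. with B̌(n,i) = (2(cos τ − 1)/τ²) x(n,i): x_tť(n,i) − α² x_sš(n,i) + [1/(x_s(n+1,i) x_s(n−1,i)) − 1/(x_s(n+1,i−1) x_s(n−1,i−1))]/h − (2(cos τ − 1)/τ²) x(n,i) = 0 for all (n,i). Define T(n,i) = x_t(n,i) sin(t_n) − x(n,i)(sin(t_{n+1}) − sin(t_n))/τ, with t_n = nτ. Then the additional finite-difference conservation law holds: (T(n,i) − T(n−1,i))/τ + ( sin(t_n)[1/(x_s(n+1,i) x_s(n−1,i)) − α² x_s(n,i)] − sin(t_n)[1/(x_s(n+1,i−1)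 x_s(n−1,i−1)) − α² x_s(n,i−1)] )/h = 0 for all (n,i). -/
/-!
The sequence `sin (n * τ)` solves the discrete oscillator `y_tť = (2 (cos τ - 1) / τ²) y` exactly,
which is the bottom term of the scheme. The discrete Lagrange identity for the Wronskian
`x_t y - x y_t` therefore turns `sin (n * τ)` times the scheme into a divergence in time;
the spatial flux term of the scheme is already a divergence in space.
-/

/-- Forward time difference on a uniform mesh with time step τ. -/
noncomputable def xt (τ : ℝ) (x : ℤ → ℤ → ℝ) (n i : ℤ) : ℝ := (x (n + 1) i - x n i) / τ

/-- Forward space difference on a uniform mesh with space step h. -/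
noncomputable def xs (h : ℝ) (x : ℤ → ℤ → ℝ) (n i : ℤ) : ℝ := (x n (i + 1) - x n i) / h

/-- Second time difference. -/
noncomputable def xtt (τ : ℝ) (x : ℤ → ℤ → ℝ) (n i : ℤ) : ℝ :=
  (x (n + 1) i - 2 * x n i + x (n - 1) i) / τ ^ 2

/-- Second space difference. -/
noncomputable def xss (h : ℝ) (x : ℤ → ℤ → ℝ) (n i : ℤ) : ℝ :=
  (x n (i + 1) - 2 * x n i + x n (i - 1)) / h ^ 2

/-- Conserved density of the first additional conservation law for the
parabolic bottom concave down. -/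
noncomputable def Tsin (α τ h : ℝ) (x : ℤ → ℤ → ℝ) (n i : ℤ) : ℝ :=
  xt τ x n i * Real.sin ((n : ℝ) * τ)
    - x n i * (Real.sin (((n : ℝ) + 1) * τ) - Real.sin ((n : ℝ) * τ)) / τ

open Real

noncomputable def timeWronskian (τ : ℝ) (x y : ℤ → ℤ → ℝ) (n i : ℤ) : ℝ :=
  xt τ x n i * y n i - x n i * xt τ y n i

theorem timeWronskian_sub_div (τ : ℝ) (x y : ℤ → ℤ → ℝ) (n i : ℤ) :
    (timeWronskian τ x y n i - timeWronskian τ x y (n - 1) i) / τ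
      = y n i * xtt τ x n i - x n i * xtt τ y n i := by
  simp only [timeWronskian, xt, xtt, sub_add_cancel]
  ring

theorem xtt_sin_mul (τ : ℝ) (n i : ℤ) :
    xtt τ (fun m _ => sin (m * τ)) n i = 2 * (cos τ - 1) / τ ^ 2 * sin (n * τ) := by
  have hsin : sin ((n + 1 : ℤ) * τ) + sin ((n - 1 : ℤ) * τ) = 2 * cos τ * sin (n * τ) := by
    push_cast
    rw [add_mul, sub_mul, one_mul, sin_add, sin_sub]
    ring
  simp only [xtt]
  linear_combination hsin / τ ^ 2

theorem Tsin_eq_timeWronskian (α τ h : ℝ) (x : ℤ → ℤ → ℝ) (n i : ℤ) :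
    Tsin α τ h x n i = timeWronskian τ x (fun m _ => sin (m * τ)) n i := by
  simp only [Tsin, timeWronskian, xt]
  push_cast
  ring

theorem xss_eq_sub_xs_div (h : ℝ) (x : ℤ → ℤ → ℝ) (n i : ℤ) :
    xss h x n i = (xs h x n i - xs h x n (i - 1)) / h := by
  simp only [xss, xs, sub_add_cancel]
  ring

theorem fd_smhd_parabolic_down_cl1_general
    (α τ h : ℝ)
    (x : ℤ → ℤ → ℝ)
    (scheme : ∀ n i : ℤ,
      xtt τ x n i - α ^ 2 * xss h x n i
        + (1 / (xs h x (n + 1) i * xs h x (n - 1) i)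
            - 1 / (xs h x (n + 1) (i - 1) * xs h x (n - 1) (i - 1))) / h
        - (2 * (Real.cos τ - 1) / τ ^ 2) * x n i = 0) :
    ∀ n i : ℤ,
      (Tsin α τ h x n i - Tsin α τ h x (n - 1) i) / τ
        + (Real.sin ((n : ℝ) * τ)
              * (1 / (xs h x (n + 1) i * xs h x (n - 1) i) - α ^ 2 * xs h x n i)
            - Real.sin ((n : ℝ) * τ)
              * (1 / (xs h x (n + 1) (i - 1) * xs h x (n - 1) (i - 1))
                  - α ^ 2 * xs h x n (i - 1))) / h = 0 := by
  intro n i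
  have hscheme := scheme n i
  rw [xss_eq_sub_xs_div] at hscheme
  rw [Tsin_eq_timeWronskian, Tsin_eq_timeWronskian, timeWronskian_sub_div, xtt_sin_mul]
  linear_combination sin (n * τ) * hscheme

/-- first additional finite-difference conservation law for the
invariant SMHD scheme with parabolic bottom concave down. -/
theorem fd_smhd_parabolic_down_cl1
    (α τ h : ℝ) (hτ : 0 < τ) (hh : 0 < h)
    (x : ℤ → ℤ → ℝ) (hxs : ∀ n i, xs h x n i ≠ 0)
    (scheme : ∀ n i : ℤ,
      xtt τ x n i - α ^ 2 * xss h x n i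
        + (1 / (xs h x (n + 1) i * xs h x (n - 1) i)
            - 1 / (xs h x (n + 1) (i - 1) * xs h x (n - 1) (i - 1))) / h
        - (2 * (Real.cos τ - 1) / τ ^ 2) * x n i = 0) :
    ∀ n i : ℤ,
      (Tsin α τ h x n i - Tsin α τ h x (n - 1) i) / τ
        + (Real.sin ((n : ℝ) * τ)
              * (1 / (xs h x (n + 1) i * xs h x (n - 1) i) - α ^ 2 * xs h x n i)
            - Real.sin ((n : ℝ) * τ)
              * (1 / (xs h x (n + 1) (i - 1) * xs h x (n - 1) (i - 1))
                  - α ^ 2 * xs h x n (i - 1))) / h = 0 :=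
  fd_smhd_parabolic_down_cl1_general α τ h x scheme
end

section
/- Let α ∈ ℝ, τ > 0, h > 0, let b : ℝ → ℝ be any function, and let x : ℤ × ℤ → ℝ be a grid function with x_s(n,i) ≠ 0 and x_t(n,i) + x_ť(n,i) ≠ 0 for all (n,i), satisfying the modified scheme for arbitrary bottom topography: x_tť(n,i) − α² x_sš(n,i) + [1/(x_s(n+1,i) x_s(n−1,i)) − 1/(x_s(n+1,i−1) x_s(n−1,i−1))]/h − [ (b(x(n+1,i)) − b(x(n−1,i)))/τ ] / ( x_t(n,i) + x_ť(n,i) ) = 0 for all (n,i). Define T(n,i) = x_t(n,i)² + 1/x_s(n,i) + 1/x_s(n+1,i) + α² x_s(n,i) x_s(n+1,i) − b(x(n+1,i)) − b(x(n,i)) and S(n,i) = ( x_t(n,i+1) + x_t(n−1,i+1) )( 1/(x_s(n+1,i) x_s(n−1,i)) − α² x_s(n,i) ). Then the finite-difference conservation law of energy holds: (T(n,i) − T(n−1,i))/τ + (S(n,i) − S(n,i−1))/h = 0 for all (n,i). -/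
/-- Conserved density of the energy conservation law for arbitrary bottom
topography b. -/
noncomputable def Tarb (α τ h : ℝ) (b : ℝ → ℝ) (x : ℤ → ℤ → ℝ) (n i : ℤ) : ℝ :=
  (xt τ x n i) ^ 2 + 1 / xs h x n i + 1 / xs h x (n + 1) i
    + α ^ 2 * xs h x n i * xs h x (n + 1) i - b (x (n + 1) i) - b (x n i)

/-- Flux of the energy conservation law for arbitrary bottom topography b. -/
noncomputable def Sarb (α τ h : ℝ) (x : ℤ → ℤ → ℝ) (n i : ℤ) : ℝ :=
  (xt τ x n (i + 1) + xt τ x (n - 1) (i + 1))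
    * (1 / (xs h x (n + 1) i * xs h x (n - 1) i) - α ^ 2 * xs h x n i)

/-
The energy identity is the discrete analogue of multiplying the equation by x_t: the flux difference
plus the density difference equals (x_t + x_ť) times the left-hand side of the scheme. Commuting the
mixed difference, x_t(n,i+1) = x_t(n,i) + (h/τ)(x_s(n+1,i) − x_s(n,i)), splits the flux into
(x_t + x_ť) times the spatial part of the scheme plus a remainder that cancels the 1/x_s and
α² x_s x_s terms of the density. The bottom term closes the identity precisely because B̌ was chosen
so that (x_t + x_ť) B̌ is the time difference of b(x).
-/

noncomputable def smhdResidual (α τ h : ℝ) (b : ℝ → ℝ) (x : ℤ → ℤ → ℝ) (n i : ℤ) : ℝ :=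
  xtt τ x n i - α ^ 2 * xss h x n i
    + (1 / (xs h x (n + 1) i * xs h x (n - 1) i)
        - 1 / (xs h x (n + 1) (i - 1) * xs h x (n - 1) (i - 1))) / h
    - ((b (x (n + 1) i) - b (x (n - 1) i)) / τ) / (xt τ x n i + xt τ x (n - 1) i)

section Differences

variable (x : ℤ → ℤ → ℝ) (n i : ℤ)

theorem xtt_eq_sub_div (τ : ℝ) : xtt τ x n i = (xt τ x n i - xt τ x (n - 1) i) / τ := by
  simp only [xtt, xt, sub_add_cancel]
  ring

theorem xss_eq_sub_div (h : ℝ) : xss h x n i = (xs h x n i - xs h x n (i - 1)) / h := by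
  simp only [xss, xs, sub_add_cancel]
  ring

theorem xt_space_succ_eq {τ h : ℝ} (hh : h ≠ 0) :
    xt τ x n (i + 1) = xt τ x n i + h / τ * (xs h x (n + 1) i - xs h x n i) := by
  simp only [xt, xs]
  field_simp
  ring

theorem Tarb_sub_Tarb_sub_one (α τ h : ℝ) (b : ℝ → ℝ) :
    Tarb α τ h b x n i - Tarb α τ h b x (n - 1) i
      = (xt τ x n i + xt τ x (n - 1) i) * (xt τ x n i - xt τ x (n - 1) i)
        + (1 / xs h x (n + 1) i - 1 / xs h x (n - 1) i)
        + α ^ 2 * xs h x n i * (xs h x (n + 1) i - xs h x (n - 1) i)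
        - (b (x (n + 1) i) - b (x (n - 1) i)) := by
  simp only [Tarb, sub_add_cancel]
  ring

theorem Sarb_sub_Sarb_sub_one (α : ℝ) {τ h : ℝ} (hh : h ≠ 0) :
    Sarb α τ h x n i - Sarb α τ h x n (i - 1)
      = (xt τ x n i + xt τ x (n - 1) i)
          * ((1 / (xs h x (n + 1) i * xs h x (n - 1) i)
              - 1 / (xs h x (n + 1) (i - 1) * xs h x (n - 1) (i - 1)))
            - α ^ 2 * (xs h x n i - xs h x n (i - 1)))
        + h / τ * (xs h x (n + 1) i - xs h x (n - 1) i)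
          * (1 / (xs h x (n + 1) i * xs h x (n - 1) i) - α ^ 2 * xs h x n i) := by
  have hsum : xt τ x n (i + 1) + xt τ x (n - 1) (i + 1)
      = xt τ x n i + xt τ x (n - 1) i + h / τ * (xs h x (n + 1) i - xs h x (n - 1) i) := by
    rw [xt_space_succ_eq x n i hh, xt_space_succ_eq x (n - 1) i hh, sub_add_cancel]
    ring
  simp only [Sarb, sub_add_cancel, hsum]
  ring

end Differences

theorem energy_balance (α : ℝ) {τ h : ℝ} (hτ : τ ≠ 0) (hh : h ≠ 0) (b : ℝ → ℝ)
    (x : ℤ → ℤ → ℝ) (n i : ℤ) (hsucc : xs h x (n + 1) i ≠ 0) (hpred : xs h x (n - 1) i ≠ 0)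
    (hxt : xt τ x n i + xt τ x (n - 1) i ≠ 0) :
    (Tarb α τ h b x n i - Tarb α τ h b x (n - 1) i) / τ
        + (Sarb α τ h x n i - Sarb α τ h x n (i - 1)) / h
      = (xt τ x n i + xt τ x (n - 1) i) * smhdResidual α τ h b x n i := by
  rw [Tarb_sub_Tarb_sub_one, Sarb_sub_Sarb_sub_one x n i α hh, smhdResidual,
    xtt_eq_sub_div, xss_eq_sub_div]
  field_simp
  ring

/-- finite-difference energy conservation law for the modified
invariant SMHD scheme with arbitrary bottom topography. -/
theorem fd_smhd_energy_arbitrary_bottom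
    (α τ h : ℝ) (hτ : 0 < τ) (hh : 0 < h)
    (b : ℝ → ℝ) (x : ℤ → ℤ → ℝ)
    (hxs : ∀ n i, xs h x n i ≠ 0)
    (hxt : ∀ n i, xt τ x n i + xt τ x (n - 1) i ≠ 0)
    (scheme : ∀ n i : ℤ,
      xtt τ x n i - α ^ 2 * xss h x n i
        + (1 / (xs h x (n + 1) i * xs h x (n - 1) i)
            - 1 / (xs h x (n + 1) (i - 1) * xs h x (n - 1) (i - 1))) / h
        - ((b (x (n + 1) i) - b (x (n - 1) i)) / τ)
            / (xt τ x n i + xt τ x (n - 1) i) = 0) :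
    ∀ n i : ℤ,
      (Tarb α τ h b x n i - Tarb α τ h b x (n - 1) i) / τ
        + (Sarb α τ h x n i - Sarb α τ h x n (i - 1)) / h = 0 := by
  intro n i
  have hres : smhdResidual α τ h b x n i = 0 := scheme n i
  rw [energy_balance α hτ.ne' hh.ne' b x n i (hxs (n + 1) i) (hxs (n - 1) i) (hxt n i), hres,
    mul_zero]
end
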